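/- arXiv:2602.14310 — 2 statements merged into one kernel-verified Lean document; each statement's English description precedes it below -/
import Mathlib

section
/- Let Z : ℝ × ℝ → ℝ be continuous, bounded, and Lipschitz in its second argument, and let M : [0,T] → ℝ be continuous with M(0) = 0. Define ξ(t) := φ(M(t), x), where φ(s,x) is the flow of the ODE ẏ = Z(s,y), y(0) = x. If M is continuously differentiable, then ξ solves the controlled ODE ξ(t) = x + ∫₀ᵗ Z(M(s), ξ(s)) dM(s). -/
open Set intervalIntegral

theorem flow_solves_controlled_ODE
    (T : ℝ) (hT : 0 ≤ T)
    (Z : ℝ × ℝ → ℝ) (C L : ℝ)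
    (hZc : Continuous Z)
    (hbdd : ∀ p, |Z p| ≤ C)
    (hlip : ∀ t x y, |Z (t, x) - Z (t, y)| ≤ L * |x - y|)
    (M : ℝ → ℝ) (hMc : Continuous M) (hM0 : M 0 = 0)
    (hM : Differentiable ℝ M) (hM' : Continuous (deriv M))
    (φ : ℝ → ℝ → ℝ)
    (hφ0 : ∀ x, φ 0 x = x)
    (hφ : ∀ s x, HasDerivAt (fun u => φ u x) (Z (s, φ s x)) s)
    (x : ℝ) :
    ∀ t ∈ Icc (0:ℝ) T,
      φ (M t) x = x + ∫ s in (0:ℝ)..t, Z (M s, φ (M s) x) * deriv M s := by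
  intro t _
  have hφcont : Continuous (fun u => φ u x) :=
    Differentiable.continuous (fun u => (hφ u x).differentiableAt)
  have hderiv : ∀ s : ℝ, HasDerivAt (fun u => φ (M u) x)
      (Z (M s, φ (M s) x) * deriv M s) s := fun s =>
    (hφ (M s) x).comp s (hM s).hasDerivAt
  have hcontI : Continuous (fun s => Z (M s, φ (M s) x) * deriv M s) :=
    (hZc.comp (hMc.prodMk (hφcont.comp hMc))).mul hM'
  have := intervalIntegral.integral_eq_sub_of_hasDerivAt
    (f := fun u => φ (M u) x) (a := (0:ℝ)) (b := t)
    (fun s _ => hderiv s) (hcontI.intervalIntegrable 0 t)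
  rw [this]
  simp [hM0, hφ0]
end

section
/- Let (E,d) be a metric space, x ∈ D([0,T], E) a càdlàg path with jump times (t_k) ordered by decreasing jump size, and φ an admissible path function for x. Fix a summable positive sequence (r_k) with r = Σ r_k. Define τ(t) = t + Σ_k r_k·1_{t_k ≤ t} and the interpolated path x̂ : [0,T+r] → E by x̂(s) = x(t) if s = τ(t), and x̂(s) = φ(x(t_k-), x(t_k))((s - τ(t_k-))/r_k) if s ∈ [τ(t_k-), τ(t_k)). If x has finitely many jumps, then x̂ is continuous on [0, T+r]. -/
/-!
Write `C s = ∑_{t k ≤ s} r k` and `C⁻ s = ∑_{t k < s} r k`, so that `τ s = s + C s` and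
`τ(s-) = s + C⁻ s`. With finitely many jumps `C` is locally constant on either side of each point,
so just right of `τ s` and just left of `τ(s-)` the path `x̂` is a translate of `x`. There it
inherits the right-continuity of `x` at `s`, resp. tends to `x(s-)`, which is `x̂ (τ(s-))`: either
`x s` (no jump at `s`) or `φ k 0` (start of the `k`-th inserted interval). On the closed inserted
intervals `x̂` is a reparametrised `φ k`. Since `τ` is monotone and right-continuous, every point
of `[0, T + r]` lies in some `[τ(s-), τ s]`, so one of these descriptions applies on each side.
-/

open Set Filter Topology

theorem continuousWithinAt_Icc_of_Iic_of_Ici {α β : Type*} [LinearOrder α] [TopologicalSpace α]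
    [TopologicalSpace β] {f : α → β} {a b y : α} (hy : y ∈ Icc a b)
    (hl : a < y → ContinuousWithinAt f (Iic y) y) (hr : y < b → ContinuousWithinAt f (Ici y) y) :
    ContinuousWithinAt f (Icc a b) y := by
  rw [← Icc_union_Icc_eq_Icc hy.1 hy.2]
  refine ContinuousWithinAt.union ?_ ?_
  · rcases hy.1.eq_or_lt with rfl | h
    · simp
    · exact (hl h).mono Icc_subset_Iic_self
  · rcases hy.2.eq_or_lt with rfl | h
    · simp
    · exact (hr h).mono Icc_subset_Ici_self

theorem continuousOn_Icc_of_affine_reparam {E : Type*} [TopologicalSpace E] {f Φ : ℝ → E}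
    {a ρ : ℝ} (hρ : 0 < ρ) (hΦ : ContinuousOn Φ (Icc 0 1))
    (hf : ∀ u ∈ Icc (0 : ℝ) 1, f (a + u * ρ) = Φ u) : ContinuousOn f (Icc a (a + ρ)) := by
  have hmaps : MapsTo (fun z => (z - a) / ρ) (Icc a (a + ρ)) (Icc 0 1) := fun z hz =>
    ⟨div_nonneg (sub_nonneg.2 hz.1) hρ.le, (div_le_one hρ).2 (by linarith [hz.2])⟩
  refine (hΦ.comp (by fun_prop) hmaps).congr fun z hz => ?_
  rw [Function.comp_apply, ← hf _ (hmaps hz), div_mul_cancel₀ _ hρ.ne', add_sub_cancel]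

theorem Monotone.exists_mem_Icc_le_le {f L : ℝ → ℝ} (hf : Monotone f)
    (hfr : ∀ s, ContinuousWithinAt f (Ici s) s) (hL : ∀ s, Tendsto f (𝓝[<] s) (𝓝 (L s)))
    {a b y : ℝ} (hab : a ≤ b) (hy : y ∈ Icc (f a) (f b)) :
    ∃ s ∈ Icc a b, L s ≤ y ∧ y ≤ f s := by
  set S := Icc a b ∩ {u | y ≤ f u}
  have hbS : b ∈ S := ⟨⟨hab, le_rfl⟩, hy.2⟩
  have hglb : IsGLB S (sInf S) := isGLB_csInf ⟨b, hbS⟩ ⟨a, fun u hu => hu.1.1⟩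
  have hs : sInf S ∈ Icc a b := ⟨hglb.2 fun u hu => hu.1.1, hglb.1 hbS⟩
  refine ⟨sInf S, hs, ?_, ?_⟩
  · refine _root_.le_of_tendsto (hL _)
      (eventually_nhdsWithin_of_forall fun u (hu : u < sInf S) => ?_)
    rcases lt_or_ge u a with hua | hau
    · exact (hf hua.le).trans hy.1
    · by_contra! hyu
      exact (hglb.1 ⟨⟨hau, hu.le.trans hs.2⟩, hyu.le⟩).not_gt hu
  · have : (𝓝[S] sInf S).NeBot := mem_closure_iff_nhdsWithin_neBot.1 (hglb.mem_closure ⟨b, hbS⟩)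
    exact _root_.ge_of_tendsto ((hfr _).mono fun u hu => hglb.1 hu)
      (eventually_nhdsWithin_of_forall fun u hu => hu.2)

section JumpSum

variable {ι : Type*} [Fintype ι] (t rk : ι → ℝ)

noncomputable def jumpSum (s : ℝ) : ℝ := ∑ k, if t k ≤ s then rk k else 0

noncomputable def jumpSumLT (s : ℝ) : ℝ := ∑ k, if t k < s then rk k else 0

theorem jumpSum_mono (hrk : ∀ k, 0 ≤ rk k) : Monotone (jumpSum t rk) := fun u v huv =>
  Finset.sum_le_sum fun k _ => by
    split_ifs with hu hv
    exacts [le_rfl, absurd (hu.trans huv) hv, hrk k, le_rfl]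

theorem jumpSum_eq_jumpSumLT_add (s : ℝ) :
    jumpSum t rk s = jumpSumLT t rk s + ∑ k, if t k = s then rk k else 0 := by
  rw [jumpSum, jumpSumLT, ← Finset.sum_add_distrib]
  refine Finset.sum_congr rfl fun k _ => ?_
  rcases lt_trichotomy (t k) s with h | h | h
  · simp [h.le, h.ne, h.not_ge]
  · simp [h]
  · simp [h.not_ge, h.not_gt, h.ne']

theorem jumpSumLT_eq_jumpSum {s : ℝ} (hs : ∀ k, t k ≠ s) : jumpSumLT t rk s = jumpSum t rk s := by
  simp [jumpSum_eq_jumpSumLT_add, hs]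

theorem jumpSumLT_apply (ht : Function.Injective t) (k : ι) :
    jumpSumLT t rk (t k) = jumpSum t rk (t k) - rk k := by
  rw [jumpSum_eq_jumpSumLT_add, Finset.sum_eq_single k (fun j _ hj => if_neg (ht.ne hj)) (by simp),
    if_pos rfl, add_sub_cancel_right]

theorem exists_eq_of_jumpSumLT_lt {s : ℝ} (h : jumpSumLT t rk s < jumpSum t rk s) :
    ∃ k, t k = s := by
  by_contra! hs
  exact h.ne (jumpSumLT_eq_jumpSum t rk hs)

theorem eventually_jumpSum_nhdsGE (s : ℝ) : ∀ᶠ u in 𝓝[≥] s, jumpSum t rk u = jumpSum t rk s := by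
  have h : ∀ k, ∀ᶠ u in 𝓝[≥] s, (t k ≤ u ↔ t k ≤ s) := by
    intro k
    rcases le_or_gt (t k) s with hk | hk
    · filter_upwards [self_mem_nhdsWithin] with u hu using iff_of_true (hk.trans hu) hk
    · filter_upwards [Ico_mem_nhdsGE hk] with u hu using iff_of_false hu.2.not_ge hk.not_ge
  filter_upwards [eventually_all.2 h] with u hu
  exact Finset.sum_congr rfl fun k _ => if_congr (hu k) rfl rfl

theorem eventually_jumpSum_nhdsLT (s : ℝ) : ∀ᶠ u in 𝓝[<] s, jumpSum t rk u = jumpSumLT t rk s := by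
  have h : ∀ k, ∀ᶠ u in 𝓝[<] s, (t k ≤ u ↔ t k < s) := by
    intro k
    rcases lt_or_ge (t k) s with hk | hk
    · filter_upwards [Ioo_mem_nhdsLT hk] with u hu using iff_of_true hu.1.le hk
    · filter_upwards [self_mem_nhdsWithin] with u (hu : u < s) using
        iff_of_false (hu.trans_le hk).not_ge hk.not_gt
  filter_upwards [eventually_all.2 h] with u hu
  exact Finset.sum_congr rfl fun k _ => if_congr (hu k) rfl rfl

theorem exists_add_jumpSumLT_le_le (hrk : ∀ k, 0 ≤ rk k) {a b y : ℝ} (hab : a ≤ b)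
    (hy : y ∈ Icc (a + jumpSum t rk a) (b + jumpSum t rk b)) :
    ∃ s ∈ Icc a b, s + jumpSumLT t rk s ≤ y ∧ y ≤ s + jumpSum t rk s := by
  refine (monotone_id.add (jumpSum_mono t rk hrk)).exists_mem_Icc_le_le (fun s => ?_)
    (fun s => ?_) hab hy
  · refine (continuousWithinAt_id.add continuousWithinAt_const).congr_of_eventuallyEq
      ((eventually_jumpSum_nhdsGE t rk s).mono fun u hu => ?_) rfl
    simp [hu]
  · refine (((continuous_add_const _).tendsto s).mono_left nhdsWithin_le_nhds).congr'
      ((eventually_jumpSum_nhdsLT t rk s).mono fun u hu => ?_)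
    simp [hu]

variable {E : Type*} [TopologicalSpace E] {x xhat : ℝ → E} {T s : ℝ}

theorem tendsto_nhdsGT_add_jumpSum {L : E} (hs : s ∈ Ico 0 T) (hx : Tendsto x (𝓝[>] s) (𝓝 L))
    (hhat : ∀ u ∈ Icc 0 T, xhat (u + jumpSum t rk u) = x u) :
    Tendsto xhat (𝓝[>] (s + jumpSum t rk s)) (𝓝 L) := by
  rw [← Filter.map_add_right_nhdsGT, tendsto_map'_iff]
  refine hx.congr' ?_
  filter_upwards [nhdsWithin_mono _ Ioi_subset_Ici_self (eventually_jumpSum_nhdsGE t rk s),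
    Ioo_mem_nhdsGT hs.2] with u hC hu
  rw [Function.comp_apply, ← hC, hhat u ⟨hs.1.trans hu.1.le, hu.2.le⟩]

theorem tendsto_nhdsLT_add_jumpSumLT {L : E} (hs : s ∈ Ioc 0 T) (hx : Tendsto x (𝓝[<] s) (𝓝 L))
    (hhat : ∀ u ∈ Icc 0 T, xhat (u + jumpSum t rk u) = x u) :
    Tendsto xhat (𝓝[<] (s + jumpSumLT t rk s)) (𝓝 L) := by
  rw [← Filter.map_add_right_nhdsLT, tendsto_map'_iff]
  refine hx.congr' ?_
  filter_upwards [eventually_jumpSum_nhdsLT t rk s, Ioo_mem_nhdsLT hs.1] with u hC hu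
  rw [Function.comp_apply, ← hC, hhat u ⟨hu.1.le, hu.2.le.trans hs.2⟩]

theorem continuousOn_Icc_add_jumpSum {g : ℝ → E} (hrk : ∀ k, 0 ≤ rk k) {a b : ℝ} (hab : a ≤ b)
    (hgap : ∀ k, ContinuousOn g (Icc (t k + jumpSumLT t rk (t k)) (t k + jumpSum t rk (t k))))
    (hright : ∀ s ∈ Ico a b,
      ContinuousWithinAt g (Ioi (s + jumpSum t rk s)) (s + jumpSum t rk s))
    (hleft : ∀ s ∈ Ioc a b,
      ContinuousWithinAt g (Iio (s + jumpSumLT t rk s)) (s + jumpSumLT t rk s)) :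
    ContinuousOn g (Icc (a + jumpSum t rk a) (b + jumpSum t rk b)) := by
  refine fun y hy => continuousWithinAt_Icc_of_Iic_of_Ici hy (fun hay => ?_) (fun hyb => ?_)
  all_goals obtain ⟨s, hs, hsy, hys⟩ := exists_add_jumpSumLT_le_le t rk hrk hab hy
  · rcases hsy.eq_or_lt with rfl | hlt
    · have has : a < s := hs.1.lt_of_ne (by rintro rfl; exact hay.not_ge hys)
      exact continuousWithinAt_Iio_iff_Iic.1 (hleft s ⟨has, hs.2⟩)
    · obtain ⟨k, rfl⟩ :=
        exists_eq_of_jumpSumLT_lt t rk ((add_lt_add_iff_left s).1 (hlt.trans_le hys))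
      exact (hgap k y ⟨hlt.le, hys⟩).mono_of_mem_nhdsWithin (Icc_mem_nhdsLE_of_mem ⟨hlt, hys⟩)
  · rcases hys.eq_or_lt with rfl | hlt
    · have hsb : s < b := hs.2.lt_of_ne (by rintro rfl; exact lt_irrefl _ hyb)
      exact continuousWithinAt_Ioi_iff_Ici.1 (hright s ⟨hs.1, hsb⟩)
    · obtain ⟨k, rfl⟩ :=
        exists_eq_of_jumpSumLT_lt t rk ((add_lt_add_iff_left s).1 (hsy.trans_lt hlt))
      exact (hgap k y ⟨hsy, hlt.le⟩).mono_of_mem_nhdsWithin (Icc_mem_nhdsGE_of_mem ⟨hsy, hlt⟩)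

end JumpSum

theorem interpolated_path_continuous_of_finitely_many_jumps_general
    {E : Type*} [MetricSpace E]
    (T : ℝ) (hT : 0 < T)
    (n : ℕ) (t : Fin n → ℝ) (htmem : ∀ k, t k ∈ Ioc 0 T) (htinj : Function.Injective t)
    (rk : Fin n → ℝ) (hrk : ∀ k, 0 < rk k) (r : ℝ) (hr : r = ∑ k, rk k)
    (x : ℝ → E) (xl : ℝ → E)
    -- x is right-continuous on [0, T)
    (hright : ∀ s ∈ Ico 0 T, Tendsto x (𝓝[Ici s] s) (𝓝 (x s)))
    -- x has left limits xl on (0, T]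
    (hleft : ∀ s ∈ Ioc 0 T, Tendsto x (𝓝[Iio s] s) (𝓝 (xl s)))
    -- the only jumps of x are at the times t k
    (hjumps : ∀ s ∈ Ioc 0 T, xl s ≠ x s → ∃ k, t k = s)
    -- admissible path functions interpolating the jumps
    (Φ : Fin n → ℝ → E)
    (hΦcont : ∀ k, ContinuousOn (Φ k) (Icc 0 1))
    (hΦ0 : ∀ k, Φ k 0 = xl (t k))
    (τ : ℝ → ℝ) (hτ : ∀ s, τ s = s + ∑ k, if t k ≤ s then rk k else 0)
    (xhat : ℝ → E)
    (hhat₁ : ∀ s ∈ Icc 0 T, xhat (τ s) = x s)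
    (hhat₂ : ∀ k, ∀ u ∈ Icc (0:ℝ) 1, xhat (τ (t k) - rk k + u * rk k) = Φ k u) :
    ContinuousOn xhat (Icc 0 (T + r)) := by
  obtain rfl : τ = fun s => s + jumpSum t rk s := funext hτ
  have hC0 : jumpSum t rk 0 = 0 := by simp [jumpSum, fun k => (htmem k).1.not_ge]
  have hCT : jumpSum t rk T = r := by simp [jumpSum, hr, fun k => (htmem k).2]
  suffices ContinuousOn xhat (Icc (0 + jumpSum t rk 0) (T + jumpSum t rk T)) by
    rwa [hC0, hCT, zero_add] at this
  refine continuousOn_Icc_add_jumpSum t rk (fun k => (hrk k).le) hT.le (fun k => ?_)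
    (fun s hs => ?_) (fun s hs => ?_)
  · rw [jumpSumLT_apply t rk htinj, ← add_sub_assoc]
    simpa using continuousOn_Icc_of_affine_reparam (hrk k) (hΦcont k) (hhat₂ k)
  · rw [ContinuousWithinAt, hhat₁ s (Ico_subset_Icc_self hs)]
    exact tendsto_nhdsGT_add_jumpSum t rk hs
      ((hright s hs).mono_left (nhdsWithin_mono _ Ioi_subset_Ici_self)) hhat₁
  · have hval : xhat (s + jumpSumLT t rk s) = xl s := by
      by_cases hjump : ∃ k, t k = s
      · obtain ⟨k, rfl⟩ := hjump
        simpa [jumpSumLT_apply t rk htinj, add_sub_assoc, hΦ0] using hhat₂ k 0 (by simp)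
      · rw [jumpSumLT_eq_jumpSum t rk (not_exists.1 hjump), hhat₁ s (Ioc_subset_Icc_self hs)]
        exact (not_imp_comm.1 (hjumps s hs) hjump).symm
    rw [ContinuousWithinAt, hval]
    exact tendsto_nhdsLT_add_jumpSumLT t rk hs (hleft s hs) hhat₁

/-- Fill-in of finitely many jumps of a càdlàg path `x` by path functions yields a
continuous path on `[0, T + r]`. Here:
* `t k` are the (distinct) jump times, lying in `(0, T]`;
* `xl s` is the left limit of `x` at `s`;
* `Φ k` is the admissible path function interpolating from `xl (t k)` to `x (t k)`;
* `rk k > 0` are the inserted interval lengths, `r = ∑ rk`;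
* `τ s = s + ∑_{k : t k ≤ s} rk k` is the time extension;
* `xhat` is the interpolated path, specified on `τ '' [0,T]` and on the inserted
  intervals `[τ (t k) - rk k, τ (t k))`. -/
theorem interpolated_path_continuous_of_finitely_many_jumps
    {E : Type*} [MetricSpace E]
    (T : ℝ) (hT : 0 < T)
    (n : ℕ) (t : Fin n → ℝ) (htmem : ∀ k, t k ∈ Ioc 0 T) (htinj : Function.Injective t)
    (rk : Fin n → ℝ) (hrk : ∀ k, 0 < rk k) (r : ℝ) (hr : r = ∑ k, rk k)
    (x : ℝ → E) (xl : ℝ → E)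
    -- x is right-continuous on [0, T)
    (hright : ∀ s ∈ Ico 0 T, Tendsto x (𝓝[Ici s] s) (𝓝 (x s)))
    -- x has left limits xl on (0, T]
    (hleft : ∀ s ∈ Ioc 0 T, Tendsto x (𝓝[Iio s] s) (𝓝 (xl s)))
    -- the only jumps of x are at the times t k
    (hjumps : ∀ s ∈ Ioc 0 T, xl s ≠ x s → ∃ k, t k = s)
    -- admissible path functions interpolating the jumps
    (Φ : Fin n → ℝ → E)
    (hΦcont : ∀ k, ContinuousOn (Φ k) (Icc 0 1))
    (hΦ0 : ∀ k, Φ k 0 = xl (t k))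
    (hΦ1 : ∀ k, Φ k 1 = x (t k))
    (τ : ℝ → ℝ) (hτ : ∀ s, τ s = s + ∑ k, if t k ≤ s then rk k else 0)
    (xhat : ℝ → E)
    (hhat₁ : ∀ s ∈ Icc 0 T, xhat (τ s) = x s)
    (hhat₂ : ∀ k, ∀ u ∈ Icc (0:ℝ) 1, xhat (τ (t k) - rk k + u * rk k) = Φ k u) :
    ContinuousOn xhat (Icc 0 (T + r)) :=
  interpolated_path_continuous_of_finitely_many_jumps_general T hT n t htmem htinj rk hrk r hr x xl
    hright hleft hjumps Φ hΦcont hΦ0 τ hτ xhat hhat₁ hhat₂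
end
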